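/- For g ≥ 3, consider the homomorphism of abelian groups ∂ : (⊕_{i=1}^{g−1} M(g)) ⊕ M(g) ⊕ M(g) → M(g) defined by ∂((m_1,…,m_{g−1}), m_s, m_ρ) = Σ_{i=1}^{g−1}(T_i^{−1}(m_i) − m_i) + (S(m_s) − m_s) + (R(m_ρ) − m_ρ) (note S = S^{−1}). Writing t_{i,j} for the tuple whose i-th t-component is γ_j, s_j for the tuple whose s-component is γ_j, and ρ_j for the tuple whose ρ-component is γ_j (all other components zero), the kernel of ∂ is generated, as an abelian group, by: (F1) t_{i,j} for j ∉ {i, i+1}; (F2) t_{j,j} + t_{j,j+1} for j = 1,…,g−1; (F3) 2t_{j,j} + ρ_j + ρ_{j+1} for j = 1,…,g−1; (F4) 2t_{1,1} + 2t_{3,3} + ⋯ + 2t_{g−2,g−2} − ρ_g if g is odd, and 2t_{1,1} + 2t_{3,3} + ⋯ + 2t_{g−1,g−1} if g is even; (F5) s_j + s_{j−1} for j even; (F6) s_j − ρ_1 − ρ_2 − ⋯ − ρ_j for j odd. -/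

import Mathlib

/-- `M(g) = ℤ^g / ⟨2(e₁ + ⋯ + e_g)⟩`, i.e. `H_1(N_g; ℤ)`. -/
def MN (g : ℕ) : Type :=
  (Fin g → ℤ) ⧸ AddSubgroup.zmultiples (fun _ => (2 : ℤ) : Fin g → ℤ)

instance (g : ℕ) : AddCommGroup (MN g) := by unfold MN; infer_instance

/-- `γ_i`, the class of `e_i` in `M(g)` (`i` is a 0-based index). -/
def γ {g : ℕ} (i : Fin g) : MN g :=
  QuotientAddGroup.mk (Pi.single i 1)

/-- The inclusion `Fin (g-1) → Fin g`. -/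
def idx {g : ℕ} (i : Fin (g-1)) : Fin g := ⟨i, by have := i.isLt; omega⟩

/-- The successor map `Fin (g-1) → Fin g`, `i ↦ i+1`. -/
def idx1 {g : ℕ} (i : Fin (g-1)) : Fin g := ⟨(i : ℕ) + 1, by have := i.isLt; omega⟩

/-- The formulas defining the automorphisms `T_i` on the generators `γ_j` of `M(g)`. -/
def IsT {g : ℕ} (T : Fin (g-1) → AddAut (MN g)) : Prop :=
  ∀ i : Fin (g-1),
    T i (γ (idx i)) = - γ (idx1 i) ∧
    T i (γ (idx1 i)) = γ (idx i) + (2 : ℤ) • γ (idx1 i) ∧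
    ∀ j : Fin g, j ≠ idx i → j ≠ idx1 i → T i (γ j) = γ j

/-- The formula defining the automorphism `S` on the generators `γ_j` of `M(g)`
(with 1-based index `j`, `S(γ_j) = (-1)^j (2γ_1 + ⋯ + 2γ_{j-1} + γ_j)`). -/
def IsS {g : ℕ} (S : AddAut (MN g)) : Prop :=
  ∀ j : Fin g,
    S (γ j) = (-1 : ℤ) ^ ((j : ℕ) + 1) • ((2 : ℤ) • (∑ k ∈ Finset.Iio j, γ k) + γ j)

/-- `t_{i,j} = [t_i] ⊗ γ_j` in `(⊕_{i=1}^{g-1} M(g)) ⊕ M(g) ⊕ M(g)` (the last two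
summands are the `s`- and the `ρ`-component respectively). -/
def tt {g : ℕ} (i : Fin (g-1)) (j : Fin g) : (Fin (g-1) → MN g) × MN g × MN g :=
  (Pi.single i (γ j), 0, 0)

/-- `s_j = [s] ⊗ γ_j`. -/
def ss {g : ℕ} (j : Fin g) : (Fin (g-1) → MN g) × MN g × MN g :=
  (0, γ j, 0)

/-- `ρ_j = [ρ] ⊗ γ_j`. -/
def rr {g : ℕ} (j : Fin g) : (Fin (g-1) → MN g) × MN g × MN g :=
  (0, 0, γ j)

/-- The generators (F1)-(F6) of the kernel (all indices in the names are 1-based, so e.g.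
`t_{j,j}` is `tt j (idx j)`). -/
def kerGens (g : ℕ) (hg : 3 ≤ g) : Set ((Fin (g-1) → MN g) × MN g × MN g) :=
  -- (F1)  t_{i,j} for j ∉ {i, i+1}
  {x | ∃ (i : Fin (g-1)) (j : Fin g), (j : ℕ) ≠ i ∧ (j : ℕ) ≠ (i : ℕ) + 1 ∧ x = tt i j} ∪
  -- (F2)  t_{j,j} + t_{j,j+1}
  {x | ∃ j : Fin (g-1), x = tt j (idx j) + tt j (idx1 j)} ∪
  -- (F3)  2t_{j,j} + ρ_j + ρ_{j+1}
  {x | ∃ j : Fin (g-1), x = (2 : ℤ) • tt j (idx j) + rr (idx j) + rr (idx1 j)} ∪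
  -- (F4)  2t_{1,1} + 2t_{3,3} + ⋯ (+ possibly −ρ_g)
  {(∑ j : Fin (g-1), if Even (j : ℕ) then (2 : ℤ) • tt j (idx j) else 0) +
      (if Odd g then -(rr (⟨g-1, by omega⟩ : Fin g)) else 0)} ∪
  -- (F5)  s_j + s_{j-1} for j even (1-based)
  {x | ∃ j k : Fin g, (k : ℕ) + 1 = j ∧ Even ((j : ℕ) + 1) ∧ x = ss j + ss k} ∪
  -- (F6)  s_j − ρ_1 − ⋯ − ρ_j for j odd (1-based)
  {x | ∃ j : Fin g, Odd ((j : ℕ) + 1) ∧ x = ss j - ∑ k ∈ Finset.Iic j, rr k}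

/-!
Modulo the subgroup `K` generated by (F1)–(F6) every chain is congruent to a normal form
`∑ aᵢ t_{i,i} + b ρ_g`: (F1) and (F2) remove the off-diagonal `t_{i,j}`, (F3) rewrites `ρ_j` in
terms of `t_{j,j}` and `ρ_{j+1}`, and (F5), (F6) remove the `s_j`. The boundary of a normal form is
`∑ c_j γ_j` with `c_j = a_j + a_{j-1}` (minus `2b` when `j = g`), and such a sum vanishes in `M(g)`
exactly when all `c_j` equal one even number `2k`. This triangular system forces `a_j = 2k` for
odd `j`, `a_j = 0` for even `j`, and `b = -k` or `0` according to the parity of `g`: the normal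
form is `k • (F4)`.
-/

namespace MN

variable {g : ℕ}

def mk (g : ℕ) : (Fin g → ℤ) →+ MN g := QuotientAddGroup.mk' _

lemma mk_surjective : Function.Surjective (mk g) := QuotientAddGroup.mk'_surjective _

lemma γ_eq_mk (j : Fin g) : γ j = mk g (Pi.single j 1) := rfl

lemma sum_zsmul_γ (c : Fin g → ℤ) : ∑ j, c j • γ j = mk g c := by
  simp only [γ_eq_mk, ← map_zsmul, ← map_sum]
  congr 1
  ext k
  simp [Pi.single_apply]

lemma mk_eq_zero_iff (c : Fin g → ℤ) : mk g c = 0 ↔ ∃ k : ℤ, ∀ j, c j = 2 * k := by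
  have h : mk g c = 0 ↔ c ∈ AddSubgroup.zmultiples (fun _ => (2 : ℤ) : Fin g → ℤ) :=
    QuotientAddGroup.eq_zero_iff c
  rw [h, AddSubgroup.mem_zmultiples_iff]
  refine ⟨fun ⟨k, hk⟩ => ⟨k, fun j => by simp [← hk, mul_comm]⟩,
    fun ⟨k, hk⟩ => ⟨k, funext fun j => by simp [hk, mul_comm]⟩⟩

lemma closure_range_γ : AddSubgroup.closure (Set.range (γ (g := g))) = ⊤ := by
  refine eq_top_iff.2 fun x _ => ?_
  obtain ⟨c, rfl⟩ := mk_surjective x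
  rw [← sum_zsmul_γ]
  exact AddSubgroup.sum_mem _ fun j _ =>
    AddSubgroup.zsmul_mem _ (AddSubgroup.subset_closure (Set.mem_range_self j)) _

end MN

abbrev Chains (g : ℕ) := (Fin (g-1) → MN g) × MN g × MN g

lemma Chains.eq_top_of_forall_mem {g : ℕ} {P : AddSubgroup (Chains g)}
    (ht : ∀ i j, tt i j ∈ P) (hs : ∀ j, ss j ∈ P) (hr : ∀ j, rr j ∈ P) : P = ⊤ := by
  have hcomp : ∀ φ : MN g →+ Chains g, (∀ j, φ (γ j) ∈ P) → ∀ x, φ x ∈ P := by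
    intro φ hφ x
    have hle : AddSubgroup.closure (Set.range γ) ≤ P.comap φ :=
      (AddSubgroup.closure_le _).2 (Set.range_subset_iff.2 hφ)
    exact hle (MN.closure_range_γ ▸ AddSubgroup.mem_top x)
  refine eq_top_iff.2 fun m _ => ?_
  have hm : m = (∑ i, AddMonoidHom.inl _ _ (Pi.single i (m.1 i))) +
      AddMonoidHom.inr _ _ (AddMonoidHom.inl _ _ m.2.1) +
      AddMonoidHom.inr _ _ (AddMonoidHom.inr _ _ m.2.2) := by
    ext <;> simp [Prod.fst_sum, Prod.snd_sum]
  rw [hm]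
  refine add_mem (add_mem (sum_mem fun i _ => ?_) ?_) ?_
  · exact hcomp ((AddMonoidHom.inl _ _).comp (AddMonoidHom.single (fun _ => MN g) i))
      (ht i) _
  · exact hcomp ((AddMonoidHom.inr _ _).comp (AddMonoidHom.inl _ _)) hs _
  · exact hcomp ((AddMonoidHom.inr _ _).comp (AddMonoidHom.inr _ _)) hr _

section Boundary

variable {g : ℕ}

def boundary (T : Fin (g-1) → AddAut (MN g)) (S R : AddAut (MN g)) : Chains g →+ MN g :=
  AddMonoidHom.mk' (fun m => (∑ i, ((T i).symm (m.1 i) - m.1 i)) +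
      (S m.2.1 - m.2.1) + (R m.2.2 - m.2.2)) fun a b => by
    simp only [Prod.fst_add, Prod.snd_add, Pi.add_apply, map_add, add_sub_add_comm,
      Finset.sum_add_distrib]
    abel

variable {T : Fin (g-1) → AddAut (MN g)} {S R : AddAut (MN g)}

lemma boundary_apply (m : Chains g) : boundary T S R m =
    (∑ i, ((T i).symm (m.1 i) - m.1 i)) + (S m.2.1 - m.2.1) + (R m.2.2 - m.2.2) := rfl

lemma boundary_tt (i : Fin (g-1)) (j : Fin g) :
    boundary T S R (tt i j) = (T i).symm (γ j) - γ j := by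
  rw [boundary_apply, Fintype.sum_eq_single i fun i' hi' => by simp [tt, Pi.single_eq_of_ne hi']]
  simp [tt]

lemma boundary_ss (j : Fin g) : boundary T S R (ss j) = S (γ j) - γ j := by
  simp [boundary_apply, ss]

lemma boundary_rr (hR : ∀ x, R x = -x) (j : Fin g) :
    boundary T S R (rr j) = -((2 : ℤ) • γ j) := by
  simp [boundary_apply, rr, hR]
  abel

lemma IsT.symm_apply_γ_idx1 (hT : IsT T) (i : Fin (g-1)) :
    (T i).symm (γ (idx1 i)) = -γ (idx i) := by
  rw [AddEquiv.symm_apply_eq, map_neg, (hT i).1, neg_neg]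

lemma IsT.symm_apply_γ_idx (hT : IsT T) (i : Fin (g-1)) :
    (T i).symm (γ (idx i)) = γ (idx1 i) + (2 : ℤ) • γ (idx i) := by
  rw [AddEquiv.symm_apply_eq, map_add, map_zsmul, (hT i).2.1, (hT i).1]
  abel

lemma IsT.symm_apply_γ_of_ne (hT : IsT T) {i : Fin (g-1)} {j : Fin g} (h : j ≠ idx i)
    (h1 : j ≠ idx1 i) : (T i).symm (γ j) = γ j := by
  rw [AddEquiv.symm_apply_eq, (hT i).2.2 j h h1]

lemma boundary_tt_idx (hT : IsT T) (i : Fin (g-1)) :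
    boundary T S R (tt i (idx i)) = γ (idx i) + γ (idx1 i) := by
  rw [boundary_tt, hT.symm_apply_γ_idx]
  abel

lemma boundary_tt_idx1 (hT : IsT T) (i : Fin (g-1)) :
    boundary T S R (tt i (idx1 i)) = -(γ (idx i) + γ (idx1 i)) := by
  rw [boundary_tt, hT.symm_apply_γ_idx1]
  abel

end Boundary

section NormalForm

variable {g : ℕ}

@[simp] lemma coe_idx (i : Fin (g-1)) : (idx i : ℕ) = i := rfl

@[simp] lemma coe_idx1 (i : Fin (g-1)) : (idx1 i : ℕ) = i + 1 := rfl

lemma idx_injective : Function.Injective (idx (g := g)) := fun i i' h => by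
  simpa [Fin.ext_iff] using h

lemma idx1_injective : Function.Injective (idx1 (g := g)) := fun i i' h => by
  simpa [Fin.ext_iff] using h

lemma sum_comp_idx {M : Type*} [AddCommMonoid M] (f : Fin g → M) :
    ∑ i : Fin (g-1), f (idx i) = ∑ j : Fin g, if (j : ℕ) < g - 1 then f j else 0 := by
  refine Fintype.sum_of_injective idx idx_injective _ _ (fun j hj => if_neg fun h => ?_)
    fun i => (if_pos i.isLt).symm
  exact hj ⟨⟨j, h⟩, rfl⟩

lemma sum_comp_idx1 {M : Type*} [AddCommMonoid M] (f : Fin g → M) :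
    ∑ i : Fin (g-1), f (idx1 i) = ∑ j : Fin g, if (j : ℕ) = 0 then 0 else f j := by
  refine Fintype.sum_of_injective idx1 idx1_injective _ _ (fun j hj => if_pos ?_)
    fun i => (if_neg (Nat.succ_ne_zero i)).symm
  by_contra h
  exact hj ⟨⟨j - 1, by omega⟩, Fin.ext (by simp; omega)⟩

variable (g) [NeZero g]

def lastIdx : Fin g := ⟨g - 1, Nat.sub_one_lt (NeZero.ne g)⟩

/-- `(a, b) ↦ ∑ aᵢ t_{i,i} + b ρ_g`. The coefficients are indexed by `ℕ` to keep `a (j - 1)` free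
of `Fin` casts; only the `a i` with `i < g - 1` enter. -/
def normalForm : (ℕ → ℤ) × ℤ →+ Chains g :=
  AddMonoidHom.mk' (fun p => ∑ i : Fin (g-1), p.1 i • tt i (idx i) + p.2 • rr (lastIdx g))
    fun p q => by
    simp only [Prod.fst_add, Prod.snd_add, Pi.add_apply, add_smul, Finset.sum_add_distrib]
    abel

def nfCoeff (p : (ℕ → ℤ) × ℤ) (j : Fin g) : ℤ :=
  (if (j : ℕ) < g - 1 then p.1 j else 0) + (if (j : ℕ) = 0 then 0 else p.1 (j - 1)) -
    if j = lastIdx g then 2 * p.2 else 0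

variable {g}

lemma boundary_normalForm {T : Fin (g-1) → AddAut (MN g)} {S R : AddAut (MN g)} (hT : IsT T)
    (hR : ∀ x, R x = -x) (p : (ℕ → ℤ) × ℤ) :
    boundary T S R (normalForm g p) = MN.mk g (nfCoeff g p) := by
  have h1 : ∑ j : Fin g, (if (j : ℕ) = 0 then 0 else p.1 (j - 1)) • γ j =
      ∑ i : Fin (g-1), p.1 i • γ (idx1 i) := by
    simp only [ite_smul, zero_smul, ← sum_comp_idx1 (fun j => p.1 (j - 1) • γ j), coe_idx1,
      Nat.add_sub_cancel]
  rw [← MN.sum_zsmul_γ]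
  simp only [normalForm, AddMonoidHom.mk'_apply, map_add, map_sum, map_zsmul,
    boundary_tt_idx hT, boundary_rr hR, nfCoeff, add_smul, sub_smul, Finset.sum_add_distrib,
    Finset.sum_sub_distrib, h1]
  simp only [ite_smul, zero_smul, ← sum_comp_idx (fun j => p.1 j • γ j), Finset.sum_ite_eq',
    Finset.mem_univ, if_true, mul_smul, coe_idx]
  simp only [smul_neg, smul_comm p.2, smul_add, Finset.sum_add_distrib]
  abel

end NormalForm

lemma eq_ite_even_of_add_eq {n : ℕ} {a : ℕ → ℤ} {c : ℤ} (h0 : a 0 = c)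
    (hstep : ∀ j, j + 1 < n → a (j + 1) + a j = c) :
    ∀ j < n, a j = if Even j then c else 0 := by
  intro j hj
  induction j with
  | zero => simpa using h0
  | succ j ih =>
    rw [eq_sub_of_add_eq (hstep j hj), ih (by omega)]
    by_cases he : Even j <;> simp [he, Nat.even_add_one]

section F4

variable (g : ℕ) [NeZero g]

def f4 : (ℕ → ℤ) × ℤ := (fun i => if Even i then 2 else 0, if Odd g then -1 else 0)

variable {g}

lemma nfCoeff_f4 (j : Fin g) : nfCoeff g (f4 g) j = 2 := by
  have := j.isLt
  simp only [nfCoeff, f4, lastIdx, Fin.ext_iff, ← Nat.not_even_iff_odd]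
  split_ifs <;> grind

lemma normalForm_f4 : normalForm g (f4 g) =
    (∑ j : Fin (g-1), if Even (j : ℕ) then (2 : ℤ) • tt j (idx j) else 0) +
      (if Odd g then -rr (lastIdx g) else 0) := by
  simp only [normalForm, f4, AddMonoidHom.mk'_apply, ite_smul, zero_smul, neg_smul, one_smul]

lemma normalForm_f4_mem_kerGens (hg : 3 ≤ g) : normalForm g (f4 g) ∈ kerGens g hg :=
  .inl (.inl (.inr normalForm_f4))

lemma normalForm_eq_zsmul_f4 (hg : 2 ≤ g) {p : (ℕ → ℤ) × ℤ} {k : ℤ}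
    (h : ∀ j, nfCoeff g p j = 2 * k) : normalForm g p = k • normalForm g (f4 g) := by
  have hc : ∀ j (hj : j < g), nfCoeff g p ⟨j, hj⟩ = 2 * k := fun j hj => h _
  have ha : ∀ j < g - 1, p.1 j = if Even j then 2 * k else 0 := by
    refine eq_ite_even_of_add_eq ?_ fun j hj => ?_
    · simpa [nfCoeff, lastIdx, show 0 < g - 1 by omega, show g - 1 ≠ 0 by omega]
        using hc 0 (by omega)
    · simpa [nfCoeff, lastIdx, Fin.ext_iff, hj, show j + 1 ≠ g - 1 by omega]
        using hc (j + 1) (by omega)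
  have hb : p.2 = if Odd g then -k else 0 := by
    have := hc (g - 1) (by omega)
    simp only [nfCoeff, lastIdx, lt_irrefl, if_false, if_true, show g - 1 ≠ 0 by omega,
      ha (g - 1 - 1) (by omega)] at this
    simp only [← Nat.not_even_iff_odd]
    split_ifs at this ⊢ <;> grind
  rw [← map_zsmul]
  simp only [normalForm, AddMonoidHom.mk'_apply, f4, Prod.smul_mk]
  congr 1
  · refine Finset.sum_congr rfl fun i _ => ?_
    simp [ha i i.isLt, mul_comm]
  · simp [hb]

end F4

section Generators

variable {g : ℕ} (hg : 3 ≤ g)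

lemma tt_mem_kerGens {i : Fin (g-1)} {j : Fin g} (h : (j : ℕ) ≠ i) (h1 : (j : ℕ) ≠ i + 1) :
    tt i j ∈ kerGens g hg :=
  .inl (.inl (.inl (.inl (.inl ⟨i, j, h, h1, rfl⟩))))

lemma tt_idx_add_tt_idx1_mem_kerGens (i : Fin (g-1)) :
    tt i (idx i) + tt i (idx1 i) ∈ kerGens g hg :=
  .inl (.inl (.inl (.inl (.inr ⟨i, rfl⟩))))

lemma two_zsmul_tt_add_rr_add_rr_mem_kerGens (i : Fin (g-1)) :
    (2 : ℤ) • tt i (idx i) + rr (idx i) + rr (idx1 i) ∈ kerGens g hg :=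
  .inl (.inl (.inl (.inr ⟨i, rfl⟩)))

lemma ss_add_ss_mem_kerGens {j k : Fin g} (hkj : (k : ℕ) + 1 = j) (hj : Even ((j : ℕ) + 1)) :
    ss j + ss k ∈ kerGens g hg :=
  .inl (.inr ⟨j, k, hkj, hj, rfl⟩)

lemma ss_sub_sum_rr_mem_kerGens {j : Fin g} (hj : Odd ((j : ℕ) + 1)) :
    ss j - ∑ k ∈ Finset.Iic j, rr k ∈ kerGens g hg :=
  .inr ⟨j, hj, rfl⟩

end Generators

section Kernel

variable {g : ℕ} {T : Fin (g-1) → AddAut (MN g)} {S R : AddAut (MN g)}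

lemma boundary_ss_add_ss (hS : IsS S) {j k : Fin g} (hkj : (k : ℕ) + 1 = j)
    (hj : Even ((j : ℕ) + 1)) : boundary T S R (ss j + ss k) = 0 := by
  have hk : Odd ((k : ℕ) + 1) := by grind
  have hIio : Finset.Iio j = insert k (Finset.Iio k) := by
    ext x
    simp only [Finset.mem_Iio, Finset.mem_insert, Fin.lt_def, Fin.ext_iff]
    omega
  rw [map_add, boundary_ss, boundary_ss, hS j, hS k, hj.neg_one_pow, hk.neg_one_pow, hIio,
    Finset.sum_insert (by simp)]
  simp only [one_smul, neg_one_smul]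
  abel

lemma boundary_ss_sub_sum_rr (hS : IsS S) (hR : ∀ x, R x = -x) {j : Fin g}
    (hj : Odd ((j : ℕ) + 1)) : boundary T S R (ss j - ∑ k ∈ Finset.Iic j, rr k) = 0 := by
  rw [map_sub, map_sum, boundary_ss, hS j, hj.neg_one_pow, ← Finset.Iio_insert,
    Finset.sum_insert (by simp)]
  simp only [boundary_rr hR, neg_one_smul, Finset.sum_neg_distrib, ← Finset.smul_sum]
  abel

lemma closure_kerGens_le_ker (hg : 3 ≤ g) (hT : IsT T) (hS : IsS S) (hR : ∀ x, R x = -x) :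
    AddSubgroup.closure (kerGens g hg) ≤ (boundary T S R).ker := by
  have : NeZero g := ⟨by omega⟩
  rw [AddSubgroup.closure_le]
  rintro x (((((⟨i, j, h, h1, rfl⟩ | ⟨i, rfl⟩) | ⟨i, rfl⟩) | hx) | ⟨j, k, hkj, hj, rfl⟩) |
    ⟨j, hj, rfl⟩) <;> rw [SetLike.mem_coe, AddMonoidHom.mem_ker]
  · rw [boundary_tt, hT.symm_apply_γ_of_ne (by simpa [Fin.ext_iff]) (by simpa [Fin.ext_iff]),
      sub_self]
  · rw [map_add, boundary_tt_idx hT, boundary_tt_idx1 hT, add_neg_cancel]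
  · rw [map_add, map_add, map_zsmul, boundary_tt_idx hT, boundary_rr hR, boundary_rr hR]
    abel
  · rw [hx.trans normalForm_f4.symm, boundary_normalForm hT hR, funext nfCoeff_f4,
      MN.mk_eq_zero_iff]
    exact ⟨1, fun _ => rfl⟩
  · exact boundary_ss_add_ss hS hkj hj
  · exact boundary_ss_sub_sum_rr hS hR hj

end Kernel

section Reduction

variable {g : ℕ} (hg : 3 ≤ g) {P : AddSubgroup (Chains g)}

lemma tt_mem_of_kerGens_subset (hK : kerGens g hg ⊆ P) (hdiag : ∀ i, tt i (idx i) ∈ P)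
    (i : Fin (g-1)) (j : Fin g) : tt i j ∈ P := by
  by_cases h : (j : ℕ) = i
  · exact (Fin.ext h : j = idx i) ▸ hdiag i
  by_cases h1 : (j : ℕ) = i + 1
  · rw [(Fin.ext h1 : j = idx1 i), ← add_sub_cancel_left (tt i (idx i)) (tt i (idx1 i))]
    exact sub_mem (hK (tt_idx_add_tt_idx1_mem_kerGens hg i)) (hdiag i)
  · exact hK (tt_mem_kerGens hg h h1)

lemma ss_mem_of_kerGens_subset (hK : kerGens g hg ⊆ P) (hr : ∀ j, rr j ∈ P) (j : Fin g) :
    ss j ∈ P := by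
  have heven : ∀ j : Fin g, Even (j : ℕ) → ss j ∈ P := fun j hj => by
    rw [← sub_add_cancel (ss j) (∑ k ∈ Finset.Iic j, rr k)]
    exact add_mem (hK (ss_sub_sum_rr_mem_kerGens hg (by grind))) (sum_mem fun k _ => hr k)
  rcases Nat.even_or_odd j with hj | hj
  · exact heven j hj
  · let k : Fin g := ⟨j - 1, by omega⟩
    have hkj : (k : ℕ) + 1 = j := by grind
    rw [← add_sub_cancel_right (ss j) (ss k)]
    exact sub_mem (hK (ss_add_ss_mem_kerGens hg hkj (by grind))) (heven k (by grind))

variable [NeZero g]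

lemma rr_mem_of_kerGens_subset (hK : kerGens g hg ⊆ P) (hdiag : ∀ i, tt i (idx i) ∈ P)
    (hlast : rr (lastIdx g) ∈ P) (j : Fin g) : rr j ∈ P := by
  suffices ∀ n (j : Fin g), (j : ℕ) + n = g - 1 → rr j ∈ P from this (g - 1 - j) j (by omega)
  intro n
  induction n with
  | zero => exact fun j hj => (Fin.ext hj : j = lastIdx g) ▸ hlast
  | succ n ih =>
    intro j hj
    let i : Fin (g-1) := ⟨j, by omega⟩
    have hrel : rr j = ((2 : ℤ) • tt i (idx i) + rr (idx i) + rr (idx1 i)) -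
        (2 : ℤ) • tt i (idx i) - rr (idx1 i) := by
      change rr (idx i) = _
      abel
    rw [hrel]
    exact sub_mem (sub_mem (hK (two_zsmul_tt_add_rr_add_rr_mem_kerGens hg i))
      (zsmul_mem (hdiag i) _)) (ih _ (by simp [i]; omega))

lemma sup_range_normalForm :
    AddSubgroup.closure (kerGens g hg) ⊔ (normalForm g).range = ⊤ := by
  set P := AddSubgroup.closure (kerGens g hg) ⊔ (normalForm g).range
  have hK : kerGens g hg ⊆ P := fun _ hx =>
    AddSubgroup.mem_sup_left (AddSubgroup.subset_closure hx)
  have hdiag : ∀ i, tt i (idx i) ∈ P := fun i => AddSubgroup.mem_sup_right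
    ⟨(Pi.single (i : ℕ) 1, 0), by
      simp [normalForm, Pi.single_apply, Fin.val_inj, Finset.sum_ite_eq']⟩
  have hlast : rr (lastIdx g) ∈ P :=
    AddSubgroup.mem_sup_right ⟨(0, 1), by simp [normalForm]⟩
  have hr := rr_mem_of_kerGens_subset hg hK hdiag hlast
  exact Chains.eq_top_of_forall_mem (tt_mem_of_kerGens_subset hg hK hdiag)
    (ss_mem_of_kerGens_subset hg hK hr) hr

end Reduction

lemma ker_boundary {g : ℕ} (hg : 3 ≤ g) {T : Fin (g-1) → AddAut (MN g)} {S R : AddAut (MN g)}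
    (hT : IsT T) (hS : IsS S) (hR : ∀ x, R x = -x) :
    (boundary T S R).ker = AddSubgroup.closure (kerGens g hg) := by
  have : NeZero g := ⟨by omega⟩
  have hle := closure_kerGens_le_ker hg hT hS hR
  refine le_antisymm (fun m hm => ?_) hle
  obtain ⟨y, hy, _, ⟨p, rfl⟩, rfl⟩ :=
    AddSubgroup.mem_sup.1 ((sup_range_normalForm hg).symm ▸ AddSubgroup.mem_top m)
  have hp : MN.mk g (nfCoeff g p) = 0 := by
    rw [← boundary_normalForm hT hR, ← add_sub_cancel_left y (normalForm g p), map_sub,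
      AddMonoidHom.mem_ker.1 hm, AddMonoidHom.mem_ker.1 (hle hy), sub_zero]
  obtain ⟨k, hk⟩ := (MN.mk_eq_zero_iff _).1 hp
  rw [normalForm_eq_zsmul_f4 (by omega) hk]
  exact add_mem hy (zsmul_mem (AddSubgroup.subset_closure (normalForm_f4_mem_kerGens hg)) k)

/-- The kernel of
`∂((m_1,…,m_{g-1}), m_s, m_ρ) = Σ_i (T_i⁻¹(m_i) − m_i) + (S(m_s) − m_s) + (R(m_ρ) − m_ρ)`
is generated, as an abelian group, by the elements (F1)-(F6). -/
theorem stmt11 (g : ℕ) (hg : 3 ≤ g) (T : Fin (g-1) → AddAut (MN g)) (hT : IsT T)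
    (S : AddAut (MN g)) (hS : IsS S) (R : AddAut (MN g)) (hR : ∀ x, R x = -x) :
    (∃ D : ((Fin (g-1) → MN g) × MN g × MN g) →+ MN g,
      ∀ m, D m = (∑ i : Fin (g-1), ((T i).symm (m.1 i) - m.1 i)) +
        (S m.2.1 - m.2.1) + (R m.2.2 - m.2.2)) ∧
    ∀ D : ((Fin (g-1) → MN g) × MN g × MN g) →+ MN g,
      (∀ m, D m = (∑ i : Fin (g-1), ((T i).symm (m.1 i) - m.1 i)) +
        (S m.2.1 - m.2.1) + (R m.2.2 - m.2.2)) →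
      D.ker = AddSubgroup.closure (kerGens g hg) := by
  refine ⟨⟨boundary T S R, fun _ => rfl⟩, fun D hD => ?_⟩
  obtain rfl : D = boundary T S R := AddMonoidHom.ext hD
  exact ker_boundary hg hT hS hR
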